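/- Let m be a positive integer. For n an exact divisor of m let a(n) ∈ ZMod (2m) be the unique element with a(n) ≡ −1 (mod 2n) and a(n) ≡ 1 (mod 2m/n), and let Ω(n) be the permutation matrix on ℂ^{ZMod (2m)} given by Ω(n)_{r r'} = 1 if r' = a(n)·r and 0 otherwise. Let 𝒮_{r r'} = (1/√(2m)) exp(−2πi r r'/(2m)). Let K be any finite set of exact divisors of m and set P = (∏_{n ∈ K} (I + Ω(n))/2) · (I − Ω(m))/2 (any order of the product). Then: (1) the matrices Ω(n), for n ranging over exact divisors of m, are commuting involutions; (2) P² = P; (3) 𝒮·P = P·𝒮; (4) 𝒮² = Ω(m), i.e. (𝒮²)_{r r'} = 1 if r' = −r and 0 otherwise; and (5) (𝒮 P)² = −P. -/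

import Mathlib

/-!
`𝒮` is, up to the factor `1/√(2m)`, the character table `ψ(−r r')` of `ZMod (2m)` for the
standard additive character `ψ`, so orthogonality of characters gives `𝒮² = Ω(−1)`, and `a(m) = −1`.
Each `a(n)` squares to `1` because `(k + 1)(k − 1)` is divisible by `2n · 2(m/n) = 4m`; hence the
`Ω(n)` are commuting involutions, each commuting with `𝒮` (as `𝒮_{r, a r'} = 𝒮_{a r, r'}`).
Then `P` is a product of commuting idempotents `(1 ± Ω)/2`, it commutes with `𝒮`, and
`(𝒮P)² = 𝒮²P² = Ω(m)P = −P` because `Ω(m)(1 − Ω(m)) = −(1 − Ω(m))`.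
-/

open Complex

/-- `n` is an exact divisor of `m`: a positive divisor with `gcd(n, m/n) = 1`. -/
def IsExactDivisor (m n : ℕ) : Prop := 0 < n ∧ n ∣ m ∧ Nat.gcd n (m / n) = 1

/-- `a = a(n)`: every integer lift `k` of `a ∈ ZMod (2m)` satisfies
`k ≡ −1 (mod 2n)` and `k ≡ 1 (mod 2m/n)`. -/
def IsAOf (m n : ℕ) (a : ZMod (2 * m)) : Prop :=
  ∀ k : ℤ, (k : ZMod (2 * m)) = a →
    ((2 * (n : ℤ)) ∣ k + 1 ∧ (2 * ((m / n : ℕ) : ℤ)) ∣ k - 1)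

/-- The S-matrix of the index-`m` Weil representation:
`𝒮_{r r'} = (1/√(2m))·exp(−2πi r r'/(2m))` (using the canonical lifts). -/
noncomputable def weilS (m : ℕ) : Matrix (ZMod (2 * m)) (ZMod (2 * m)) ℂ :=
  fun r r' => ((1 : ℂ) / Real.sqrt (2 * m)) *
    Complex.exp (-(2 * Real.pi * Complex.I * ((r.val * r'.val : ℕ) : ℂ)) / (2 * m))

/-- The permutation matrix of `r ↦ a·r` on `ZMod (2m)`. -/
def omegaMat (m : ℕ) (a : ZMod (2 * m)) : Matrix (ZMod (2 * m)) (ZMod (2 * m)) ℂ :=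
  fun r r' => if r' = a * r then 1 else 0

/-- The projector `P = (∏_{n ∈ l} (I + Ω(a n))/2) · (I − Ω(a m))/2`, the product
being taken along the list `l` of elements of `K`. -/
noncomputable def projMat (m : ℕ) [NeZero m] (A : ℕ → ZMod (2 * m)) (l : List ℕ) :
    Matrix (ZMod (2 * m)) (ZMod (2 * m)) ℂ :=
  (l.map fun n => ((1 : ℂ) / 2) • (1 + omegaMat m (A n))).prod *
    (((1 : ℂ) / 2) • (1 - omegaMat m (A m)))


theorem IsIdempotentElem.list_prod {M : Type*} [Monoid M] {l : List M}
    (hcomm : ∀ x ∈ l, ∀ y ∈ l, Commute x y) (h : ∀ x ∈ l, IsIdempotentElem x) :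
    IsIdempotentElem l.prod := by
  induction l with
  | nil => exact IsIdempotentElem.one
  | cons a s ih =>
    rw [List.prod_cons]
    refine IsIdempotentElem.mul_of_commute
      (Commute.list_prod_right _ _ fun y hy => hcomm a (by simp) y (by simp [hy]))
      (h a (by simp)) (ih (fun x hx y hy => hcomm x (by simp [hx]) y (by simp [hy]))
        fun x hx => h x (by simp [hx]))

section Involution

variable {𝕜 R : Type*} [Field 𝕜] [NeZero (2 : 𝕜)] [Ring R] [Algebra 𝕜 R] {u : R}

theorem isIdempotentElem_half_smul_one_add (hu : u * u = 1) :
    IsIdempotentElem ((1 / 2 : 𝕜) • (1 + u)) := by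
  have hsq : (1 + u) * (1 + u) = (2 : 𝕜) • (1 + u) := by
    simp only [add_mul, mul_add, hu, one_mul, mul_one, two_smul]
    abel
  rw [IsIdempotentElem, smul_mul_smul_comm, hsq, smul_smul]
  congr 1
  field_simp

theorem isIdempotentElem_half_smul_one_sub (hu : u * u = 1) :
    IsIdempotentElem ((1 / 2 : 𝕜) • (1 - u)) := by
  rw [sub_eq_add_neg]
  exact isIdempotentElem_half_smul_one_add (by rw [neg_mul_neg, hu])

omit [NeZero (2 : 𝕜)] in
theorem mul_smul_one_sub_of_mul_self_eq_one (hu : u * u = 1) (c : 𝕜) :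
    u * (c • (1 - u)) = -(c • (1 - u)) := by
  rw [mul_smul_comm, mul_sub, mul_one, hu, ← smul_neg, neg_sub]

end Involution

theorem isExactDivisor_self {m : ℕ} (hm : 0 < m) : IsExactDivisor m m :=
  ⟨hm, dvd_rfl, by simp [Nat.div_self hm]⟩

namespace IsAOf

variable {m n : ℕ} {a : ZMod (2 * m)}

theorem mul_self_eq_one (hn : n ∣ m) (h : IsAOf m n a) : a * a = 1 := by
  set k : ℤ := a.cast
  obtain ⟨⟨x, hx⟩, ⟨y, hy⟩⟩ := h k (ZMod.intCast_zmod_cast a)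
  have hnm : (n : ℤ) * ((m / n : ℕ) : ℤ) = m := by exact_mod_cast Nat.mul_div_cancel' hn
  have hdvd : (2 * m : ℤ) ∣ k * k - 1 :=
    ⟨2 * x * y, by linear_combination (k - 1) * hx + 2 * n * x * hy + 4 * x * y * hnm⟩
  have hzero := (ZMod.intCast_zmod_eq_zero_iff_dvd (k * k - 1) (2 * m)).2 (by exact_mod_cast hdvd)
  push_cast [k, ZMod.intCast_zmod_cast] at hzero
  exact sub_eq_zero.1 hzero

theorem eq_neg_one (h : IsAOf m m a) : a = -1 := by
  obtain ⟨hdvd, -⟩ := h a.cast (ZMod.intCast_zmod_cast a)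
  have hzero := (ZMod.intCast_zmod_eq_zero_iff_dvd (a.cast + 1) (2 * m)).2 (by exact_mod_cast hdvd)
  push_cast [ZMod.intCast_zmod_cast] at hzero
  exact eq_neg_of_add_eq_zero_left hzero

end IsAOf

section Omega

variable {m : ℕ} [NeZero m]

theorem omegaMat_mul_apply (a : ZMod (2 * m)) (M : Matrix (ZMod (2 * m)) (ZMod (2 * m)) ℂ)
    (r r' : ZMod (2 * m)) : (omegaMat m a * M) r r' = M (a * r) r' := by
  simp [Matrix.mul_apply, omegaMat]

theorem mul_omegaMat_apply {a : ZMod (2 * m)} (ha : a * a = 1)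
    (M : Matrix (ZMod (2 * m)) (ZMod (2 * m)) ℂ) (r r' : ZMod (2 * m)) :
    (M * omegaMat m a) r r' = M r (a * r') := by
  have hswap : ∀ s, r' = a * s ↔ s = a * r' := fun s => by
    constructor <;> rintro rfl <;> rw [← mul_assoc, ha, one_mul]
  simp [Matrix.mul_apply, omegaMat, hswap]

theorem omegaMat_mul (a b : ZMod (2 * m)) :
    omegaMat m a * omegaMat m b = omegaMat m (b * a) := by
  ext r r'
  simp only [omegaMat_mul_apply, omegaMat, mul_assoc]

omit [NeZero m] in
theorem omegaMat_one : omegaMat m 1 = 1 := by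
  ext r r'
  simp [omegaMat, Matrix.one_apply, eq_comm]

theorem omegaMat_commute (a b : ZMod (2 * m)) : Commute (omegaMat m a) (omegaMat m b) := by
  rw [Commute, SemiconjBy, omegaMat_mul, omegaMat_mul, mul_comm a b]

theorem omegaMat_mul_self {a : ZMod (2 * m)} (ha : a * a = 1) :
    omegaMat m a * omegaMat m a = 1 := by
  rw [omegaMat_mul, ha, omegaMat_one]

end Omega

section WeilS

variable {m : ℕ} [NeZero m]

theorem weilS_apply (r r' : ZMod (2 * m)) :
    weilS m r r' = (1 / Real.sqrt (2 * m) : ℂ) * ZMod.stdAddChar (-(r * r')) := by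
  have hcast : ((-((r.val * r'.val : ℕ) : ℤ) : ℤ) : ZMod (2 * m)) = -(r * r') := by simp
  rw [weilS, ← hcast, ZMod.stdAddChar_coe]
  push_cast
  ring_nf

theorem weilS_commute_omegaMat {a : ZMod (2 * m)} (ha : a * a = 1) :
    Commute (weilS m) (omegaMat m a) := by
  ext r r'
  rw [mul_omegaMat_apply ha, omegaMat_mul_apply, weilS_apply, weilS_apply, mul_left_comm r a r',
    mul_assoc]

theorem weilS_mul_self : weilS m * weilS m = omegaMat m (-1) := by
  ext r r'
  have hc : (1 / Real.sqrt (2 * m) : ℂ) * (1 / Real.sqrt (2 * m)) = 1 / (2 * m) := by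
    rw [div_mul_div_comm, one_mul, ← ofReal_mul, Real.mul_self_sqrt (by positivity)]
    push_cast
    ring
  have hterm : ∀ s, weilS m r s * weilS m s r' =
      1 / (2 * m) * ZMod.stdAddChar (s * -(r + r')) := fun s => by
    rw [weilS_apply, weilS_apply, mul_mul_mul_comm, hc, ← AddChar.map_add_eq_mul]
    congr 2
    ring
  rw [Matrix.mul_apply, Finset.sum_congr rfl fun s _ => hterm s, ← Finset.mul_sum,
    AddChar.sum_mulShift _ (ZMod.isPrimitive_stdAddChar _), ZMod.card, omegaMat, neg_one_mul]
  by_cases h : r' = -r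
  · rw [if_pos h, if_pos (by rw [h, add_neg_cancel, neg_zero])]
    push_cast
    exact one_div_mul_cancel (by simp [NeZero.ne m])
  · rw [if_neg h, if_neg fun h0 => h (eq_neg_of_add_eq_zero_right (neg_eq_zero.1 h0)),
      Nat.cast_zero, mul_zero]

end WeilS

section Projector

variable {m : ℕ} [NeZero m] {A : ℕ → ZMod (2 * m)} {l : List ℕ}

theorem commute_prod_map_half_smul_one_add_omegaMat {X : Matrix (ZMod (2 * m)) (ZMod (2 * m)) ℂ}
    (hX : ∀ n ∈ l, Commute X (omegaMat m (A n))) :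
    Commute X (l.map fun n => ((1 : ℂ) / 2) • (1 + omegaMat m (A n))).prod :=
  Commute.list_prod_right _ _ fun _ hy => by
    obtain ⟨n, hn, rfl⟩ := List.mem_map.1 hy
    exact ((Commute.one_right X).add_right (hX n hn)).smul_right _

theorem commute_projMat {X : Matrix (ZMod (2 * m)) (ZMod (2 * m)) ℂ}
    (hl : ∀ n ∈ l, Commute X (omegaMat m (A n))) (hm : Commute X (omegaMat m (A m))) :
    Commute X (projMat m A l) :=
  (commute_prod_map_half_smul_one_add_omegaMat hl).mul_right
    (((Commute.one_right X).sub_right hm).smul_right _)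

theorem isIdempotentElem_projMat (hl : ∀ n ∈ l, A n * A n = 1) (hm : A m * A m = 1) :
    IsIdempotentElem (projMat m A l) := by
  have hfactors : ∀ a b : ZMod (2 * m), Commute (((1 : ℂ) / 2) • (1 + omegaMat m a))
      (((1 : ℂ) / 2) • (1 + omegaMat m b)) := fun a b =>
    (((Commute.one_left _).add_left
      ((Commute.one_right _).add_right (omegaMat_commute a b))).smul_left _).smul_right _
  refine IsIdempotentElem.mul_of_commute ?_ (IsIdempotentElem.list_prod ?_ ?_)
    (isIdempotentElem_half_smul_one_sub (omegaMat_mul_self hm))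
  · exact (commute_prod_map_half_smul_one_add_omegaMat fun n _ =>
      ((Commute.one_left _).sub_left (omegaMat_commute _ _)).smul_left _).symm
  · simp only [List.mem_map]
    rintro _ ⟨n, -, rfl⟩ _ ⟨n', -, rfl⟩
    exact hfactors _ _
  · simp only [List.mem_map]
    rintro _ ⟨n, hn, rfl⟩
    exact isIdempotentElem_half_smul_one_add (omegaMat_mul_self (hl n hn))

theorem omegaMat_mul_projMat (hm : A m * A m = 1) :
    omegaMat m (A m) * projMat m A l = -projMat m A l := by
  rw [projMat, ← mul_assoc,
    (commute_prod_map_half_smul_one_add_omegaMat fun n _ => omegaMat_commute _ _).eq, mul_assoc,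
    mul_smul_one_sub_of_mul_self_eq_one (omegaMat_mul_self hm), mul_neg]

end Projector

/-- the `Ω(n)` are commuting involutions, `P` is a projector commuting
with `𝒮`, `𝒮² = Ω(m)` (the permutation matrix of `r ↦ −r`), and `(𝒮P)² = −P`. -/
theorem weil_projector_properties (m : ℕ) [NeZero m]
    (A : ℕ → ZMod (2 * m)) (hA : ∀ n, IsExactDivisor m n → IsAOf m n (A n))
    (K : Finset ℕ) (hK : ∀ n ∈ K, IsExactDivisor m n) :
    -- (1) commuting involutions
    ((∀ n n', IsExactDivisor m n → IsExactDivisor m n' →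
        omegaMat m (A n) * omegaMat m (A n') = omegaMat m (A n') * omegaMat m (A n)) ∧
     (∀ n, IsExactDivisor m n → omegaMat m (A n) * omegaMat m (A n) = 1)) ∧
    -- (2), (3), (5): for any ordering of the product defining P
    (∀ l : List ℕ, l.Nodup → l.toFinset = K →
      projMat m A l * projMat m A l = projMat m A l ∧
      weilS m * projMat m A l = projMat m A l * weilS m ∧
      (weilS m * projMat m A l) * (weilS m * projMat m A l) = -(projMat m A l)) ∧
    -- (4) 𝒮² = Ω(m), i.e. the permutation matrix of r ↦ −r
    (weilS m * weilS m = omegaMat m (A m) ∧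
     ∀ r r' : ZMod (2 * m), (weilS m * weilS m) r r' = if r' = -r then 1 else 0) := by
  have hsq : ∀ n, IsExactDivisor m n → A n * A n = 1 := fun n hn =>
    (hA n hn).mul_self_eq_one hn.2.1
  have hm : IsExactDivisor m m := isExactDivisor_self (Nat.pos_of_neZero m)
  have hAm : A m = -1 := (hA m hm).eq_neg_one
  have hS : weilS m * weilS m = omegaMat m (A m) := by rw [hAm]; exact weilS_mul_self
  refine ⟨⟨fun n n' _ _ => omegaMat_commute _ _, fun n hn => omegaMat_mul_self (hsq n hn)⟩,
    fun l _ hlK => ?_, hS, fun r r' => by rw [hS, hAm, omegaMat, neg_one_mul]⟩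
  have hl : ∀ n ∈ l, A n * A n = 1 := fun n hn => hsq n (hK n (hlK ▸ List.mem_toFinset.2 hn))
  have hP := isIdempotentElem_projMat hl (hsq m hm)
  have hSP : Commute (weilS m) (projMat m A l) :=
    commute_projMat (fun n hn => weilS_commute_omegaMat (hl n hn))
      (weilS_commute_omegaMat (hsq m hm))
  refine ⟨hP, hSP.eq, ?_⟩
  calc weilS m * projMat m A l * (weilS m * projMat m A l)
      = weilS m * weilS m * (projMat m A l * projMat m A l) := hSP.symm.mul_mul_mul_comm _ _
    _ = -projMat m A l := by rw [hS, hP.eq, omegaMat_mul_projMat (hsq m hm)]
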